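/- For φ ∈ OP(𝔻), the distance d_φ induced by the metric density 1/τ satisfies: for all z, w ∈ 𝔻 with w ∉ D(z, aτ(z)), d_φ(z,w) ≥ (1/(1+C₃))·log(1 + (1−C₃)|z−w|/τ(z)) up to a positive constant factor; in particular d_φ(z,w) → ∞ as |z−w|/τ(z) → ∞ for fixed z. -/

import Mathlib

open Metric

/-- The conformal distance on the unit disc induced by the metric density `1/τ`. -/
noncomputable def confDist (τ : ℂ → ℝ) (z w : ℂ) : ℝ :=
  ⨅ γ : {γ : ℝ → ℂ // γ 0 = z ∧ γ 1 = w ∧ ContDiffOn ℝ 1 γ (Set.Icc 0 1) ∧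
      ∀ t ∈ Set.Icc (0 : ℝ) 1, γ t ∈ ball (0 : ℂ) 1},
    ∫ t in (0 : ℝ)..1, ‖deriv γ.1 t‖ / τ (γ.1 t)

/-!
Let `K = 1 + C₁a`. Lipschitz continuity near `z` and condition (3) away from `z` together give
`τ(u) ≤ Kτ(z) + C₃|u - z|` on the whole disc, so along an admissible curve from `z` with arc
length `ℓ(t)` we have `τ(γ t) ≤ Kτ(z) + C₃ℓ(t)`. The `1/τ`-length of the curve is therefore at least
`∫ ℓ' / (Kτ(z) + C₃ℓ) = C₃⁻¹ log (1 + C₃ℓ(1)/(Kτ(z)))`, and `ℓ(1) ≥ |w - z|`. Finally the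
factor `(1 - C₃)` inside the logarithm is traded for `C₃/K` by Bernoulli's inequality
`log (1 + Lx) ≤ L log (1 + x)` for `L ≥ 1`.
-/

open Set intervalIntegral MeasureTheory

lemma Real.log_one_add_le_mul_log_one_add {x y L : ℝ} (hx : 0 ≤ x) (hL : 1 ≤ L)
    (hxy : x ≤ L * y) : Real.log (1 + x) ≤ L * Real.log (1 + y) := by
  have hy : 0 ≤ y := nonneg_of_mul_nonneg_right (hx.trans hxy) (by linarith)
  calc Real.log (1 + x) ≤ Real.log (1 + L * y) := Real.log_le_log (by linarith) (by linarith)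
    _ ≤ Real.log ((1 + y) ^ L) :=
        Real.log_le_log (by positivity) (one_add_mul_self_le_rpow_one_add (by linarith) hL)
    _ = L * Real.log (1 + y) := Real.log_rpow (by linarith) L

lemma log_le_integral_div_of_le_add_integral {v f : ℝ → ℝ} {A C : ℝ} (hv : Continuous v)
    (hv0 : ∀ t, 0 ≤ v t) (hf : ContinuousOn f (Icc 0 1)) (hfpos : ∀ t ∈ Icc (0 : ℝ) 1, 0 < f t)
    (hA : 0 < A) (hC : 0 < C) (hfle : ∀ t ∈ Icc (0 : ℝ) 1, f t ≤ A + C * ∫ s in 0..t, v s) :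
    C⁻¹ * Real.log (1 + C * (∫ t in 0..1, v t) / A) ≤ ∫ t in 0..1, v t / f t := by
  set ℓ : ℝ → ℝ := fun t => ∫ s in 0..t, v s
  have hℓ : ∀ t, HasDerivAt ℓ (v t) t := fun t => (hv.integral_hasStrictDerivAt 0 t).hasDerivAt
  have hden : ∀ t ∈ Icc (0 : ℝ) 1, 0 < A + C * ℓ t := fun t ht => by
    have : 0 ≤ ℓ t := integral_nonneg ht.1 fun s _ => hv0 s
    positivity
  have hF : ∀ t ∈ Icc (0 : ℝ) 1,
      HasDerivAt (fun t => C⁻¹ * Real.log (A + C * ℓ t)) (v t / (A + C * ℓ t)) t := by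
    intro t ht
    refine ((((hℓ t).const_mul C).const_add A).log (hden t ht).ne' |>.const_mul C⁻¹).congr_deriv ?_
    field_simp
  have hℓc : Continuous ℓ := continuous_iff_continuousAt.2 fun t => (hℓ t).continuousAt
  have hcomp : ContinuousOn (fun t => v t / (A + C * ℓ t)) (Icc 0 1) :=
    hv.continuousOn.div (by fun_prop) fun t ht => (hden t ht).ne'
  have hFTC : ∫ t in 0..1, v t / (A + C * ℓ t) =
      C⁻¹ * Real.log (A + C * ℓ 1) - C⁻¹ * Real.log (A + C * ℓ 0) :=
    integral_eq_sub_of_hasDerivAt (fun t ht => hF t (by rwa [uIcc_of_le zero_le_one] at ht))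
      (hcomp.intervalIntegrable_of_Icc zero_le_one)
  calc C⁻¹ * Real.log (1 + C * ℓ 1 / A)
      = C⁻¹ * Real.log (A + C * ℓ 1) - C⁻¹ * Real.log (A + C * ℓ 0) := by
        rw [← mul_sub, ← Real.log_div (hden 1 ⟨zero_le_one, le_rfl⟩).ne'
          (hden 0 ⟨le_rfl, zero_le_one⟩).ne']
        congr 2
        simp only [ℓ, integral_same, mul_zero, add_zero]
        field_simp
    _ = ∫ t in 0..1, v t / (A + C * ℓ t) := hFTC.symm
    _ ≤ ∫ t in 0..1, v t / f t :=
        integral_mono_on zero_le_one (hcomp.intervalIntegrable_of_Icc zero_le_one)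
          ((hv.continuousOn.div hf fun t ht => (hfpos t ht).ne').intervalIntegrable_of_Icc
            zero_le_one)
          fun t ht => div_le_div_of_nonneg_left (hv0 t) (hfpos t ht) (hfle t ht)

section Curve

variable {E : Type*} [NormedAddCommGroup E] [NormedSpace ℝ E]

lemma ContDiffOn.exists_continuous_hasDerivAt_Ioo {γ : ℝ → E} {a b : ℝ} (hab : a < b)
    (hγ : ContDiffOn ℝ 1 γ (Icc a b)) :
    ∃ V : ℝ → E, Continuous V ∧ ∀ t ∈ Ioo a b, HasDerivAt γ (V t) t := by
  refine ⟨fun s => derivWithin γ (Icc a b) (projIcc a b hab.le s), ?_, fun t ht => ?_⟩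
  · exact (hγ.continuousOn_derivWithin (uniqueDiffOn_Icc hab) le_rfl).comp_continuous
      (continuous_subtype_val.comp continuous_projIcc) fun s => (projIcc a b hab.le s).2
  · have hnhds : Icc a b ∈ nhds t := Icc_mem_nhds ht.1 ht.2
    have hd := ((hγ.differentiableOn one_ne_zero) t (Ioo_subset_Icc_self ht)).differentiableAt
      hnhds
    simpa [projIcc_of_mem hab.le (Ioo_subset_Icc_self ht), derivWithin_of_mem_nhds hnhds]
      using hd.hasDerivAt

lemma log_le_integral_norm_deriv_div [CompleteSpace E] {γ : ℝ → E} {ρ : E → ℝ} {A C : ℝ}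
    (hγ : ContDiffOn ℝ 1 γ (Icc 0 1))
    (hρ : ContinuousOn (fun t => ρ (γ t)) (Icc 0 1)) (hρpos : ∀ t ∈ Icc (0 : ℝ) 1, 0 < ρ (γ t))
    (hA : 0 < A) (hC : 0 < C) (hρle : ∀ t ∈ Icc (0 : ℝ) 1, ρ (γ t) ≤ A + C * ‖γ t - γ 0‖) :
    C⁻¹ * Real.log (1 + C * ‖γ 1 - γ 0‖ / A) ≤ ∫ t in 0..1, ‖deriv γ t‖ / ρ (γ t) := by
  obtain ⟨V, hV, hγV⟩ := hγ.exists_continuous_hasDerivAt_Ioo zero_lt_one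
  have hlength : ∀ t ∈ Icc (0 : ℝ) 1, ‖γ t - γ 0‖ ≤ ∫ s in 0..t, ‖V s‖ := fun t ht => by
    rw [← integral_eq_sub_of_hasDeriv_right_of_le ht.1 (hγ.continuousOn.mono (Icc_subset_Icc
      le_rfl ht.2)) (fun s hs => (hγV s ⟨hs.1, hs.2.trans_le ht.2⟩).hasDerivWithinAt)
      (hV.intervalIntegrable 0 t)]
    exact norm_integral_le_integral_norm ht.1
  have hderiv : ∫ t in 0..1, ‖deriv γ t‖ / ρ (γ t) = ∫ t in 0..1, ‖V t‖ / ρ (γ t) := by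
    simp only [integral_of_le zero_le_one, integral_Ioc_eq_integral_Ioo]
    exact setIntegral_congr_fun measurableSet_Ioo fun t ht => by rw [(hγV t ht).deriv]
  rw [hderiv]
  refine le_trans ?_ (log_le_integral_div_of_le_add_integral hV.norm (fun t => norm_nonneg _)
    hρ hρpos hA hC fun t ht => (hρle t ht).trans ?_)
  · gcongr
    exact hlength 1 ⟨zero_le_one, le_rfl⟩
  · gcongr
    exact hlength t ht

end Curve

lemma le_add_mul_norm_sub_of_near_or_far {τ : ℂ → ℝ} {C₁ C₃ a : ℝ} {z w : ℂ} (hC₁ : 0 ≤ C₁)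
    (hC₃ : 0 ≤ C₃) (ha : 0 ≤ a) (hτz : 0 ≤ τ z) (h1 : |τ z - τ w| ≤ C₁ * ‖z - w‖)
    (h3 : a * τ z < ‖w - z‖ → τ w ≤ τ z + C₃ * ‖w - z‖) :
    τ w ≤ (1 + C₁ * a) * τ z + C₃ * ‖w - z‖ := by
  rw [norm_sub_rev] at h1
  rcases le_or_gt ‖w - z‖ (a * τ z) with hnear | hfar
  · nlinarith [(abs_le.mp h1).1, mul_le_mul_of_nonneg_left hnear hC₁, norm_nonneg (w - z)]
  · nlinarith [h3 hfar, mul_nonneg (mul_nonneg hC₁ ha) hτz]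

lemma log_le_confDist {τ : ℂ → ℝ} (hτpos : ∀ u ∈ ball (0 : ℂ) 1, 0 < τ u)
    (hτ : ContinuousOn τ (ball 0 1)) {A C : ℝ} (hA : 0 < A) (hC : 0 < C) {z w : ℂ}
    (hz : z ∈ ball (0 : ℂ) 1) (hw : w ∈ ball (0 : ℂ) 1)
    (hτle : ∀ u ∈ ball (0 : ℂ) 1, τ u ≤ A + C * ‖u - z‖) :
    C⁻¹ * Real.log (1 + C * ‖w - z‖ / A) ≤ confDist τ z w := by
  have segment : ContDiffOn ℝ 1 (fun t : ℝ => z + t • (w - z)) (Icc 0 1) ∧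
      ∀ t ∈ Icc (0 : ℝ) 1, z + t • (w - z) ∈ ball (0 : ℂ) 1 := by
    refine ⟨by fun_prop, fun t ht => ?_⟩
    convert (convex_ball (0 : ℂ) 1) hz hw (sub_nonneg.2 ht.2) ht.1 (sub_add_cancel 1 t) using 1
    module
  have : Nonempty {γ : ℝ → ℂ // γ 0 = z ∧ γ 1 = w ∧ ContDiffOn ℝ 1 γ (Icc 0 1) ∧
      ∀ t ∈ Icc (0 : ℝ) 1, γ t ∈ ball (0 : ℂ) 1} :=
    ⟨⟨_, by simp, by simp, segment⟩⟩
  refine le_ciInf fun ⟨γ, hγ0, hγ1, hγ, hγball⟩ => ?_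
  have key := log_le_integral_norm_deriv_div hγ (hτ.comp hγ.continuousOn hγball)
    (fun t ht => hτpos _ (hγball t ht)) hA hC fun t ht => hγ0 ▸ hτle _ (hγball t ht)
  rwa [hγ0, hγ1] at key

theorem stmt_18_general (τ : ℂ → ℝ)
    (hτpos : ∀ z ∈ ball (0 : ℂ) 1, 0 < τ z)
    (C₁ : ℝ) (hC₁ : 0 < C₁)
    (h1 : ∀ z ∈ ball (0 : ℂ) 1, ∀ w ∈ ball (0 : ℂ) 1, |τ z - τ w| ≤ C₁ * ‖z - w‖)
    (C₃ a : ℝ) (hC₃0 : 0 < C₃) (hC₃1 : C₃ < 1) (ha : 0 < a)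
    (h3 : ∀ z ∈ ball (0 : ℂ) 1, ∀ w ∈ ball (0 : ℂ) 1,
      a * τ z < ‖w - z‖ → τ w ≤ τ z + C₃ * ‖w - z‖) :
    ∃ c > 0, ∀ z ∈ ball (0 : ℂ) 1, ∀ w ∈ ball (0 : ℂ) 1, a * τ z < ‖w - z‖ →
      c * (1 / (1 + C₃)) * Real.log (1 + (1 - C₃) * ‖z - w‖ / τ z) ≤
        confDist τ z w := by
  set K := 1 + C₁ * a
  have hK : 0 < K := by positivity
  set L := max 1 ((1 - C₃) * K / C₃)
  have hL : 1 ≤ L := le_max_left _ _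
  refine ⟨(1 + C₃) / (C₃ * L), by positivity, fun z hz w hw _ => ?_⟩
  have hτz := hτpos z hz
  have hτ : ContinuousOn τ (ball 0 1) :=
    (LipschitzOnWith.of_dist_le_mul (K := C₁.toNNReal) fun u hu v hv => by
      simpa [Real.coe_toNNReal _ hC₁.le, Real.dist_eq, dist_eq_norm]
        using h1 u hu v hv).continuousOn
  have hdist := log_le_confDist hτpos hτ (mul_pos hK hτz) hC₃0 hz hw fun u hu =>
    le_add_mul_norm_sub_of_near_or_far hC₁.le hC₃0.le ha.le hτz.le (h1 z hz u hu) (h3 z hz u hu)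
  have hratio : (1 - C₃) * ‖z - w‖ / τ z ≤ L * (C₃ * ‖w - z‖ / (K * τ z)) := by
    calc (1 - C₃) * ‖z - w‖ / τ z = (1 - C₃) * K / C₃ * (C₃ * ‖w - z‖ / (K * τ z)) := by
          rw [norm_sub_rev]; field_simp
      _ ≤ L * (C₃ * ‖w - z‖ / (K * τ z)) := by gcongr; exact le_max_right _ _
  calc (1 + C₃) / (C₃ * L) * (1 / (1 + C₃)) * Real.log (1 + (1 - C₃) * ‖z - w‖ / τ z)
      ≤ (1 + C₃) / (C₃ * L) * (1 / (1 + C₃)) * (L * Real.log (1 + C₃ * ‖w - z‖ / (K * τ z))) := by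
        gcongr
        exact Real.log_one_add_le_mul_log_one_add
          (div_nonneg (mul_nonneg (sub_nonneg.2 hC₃1.le) (norm_nonneg _)) hτz.le) hL hratio
    _ = C₃⁻¹ * Real.log (1 + C₃ * ‖w - z‖ / (K * τ z)) := by field_simp
    _ ≤ confDist τ z w := hdist

/-- For `τ` satisfying the `OP(𝔻)` conditions, the induced distance satisfies the
logarithmic lower bound
`d_φ(z,w) ≳ (1/(1+C₃)) log(1 + (1-C₃)|z-w|/τ(z))` for `w ∉ D(z, aτ(z))`. -/
theorem stmt_18 (τ : ℂ → ℝ)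
    (hτpos : ∀ z ∈ ball (0 : ℂ) 1, 0 < τ z)
    (C₁ : ℝ) (hC₁ : 0 < C₁)
    (h1 : ∀ z ∈ ball (0 : ℂ) 1, ∀ w ∈ ball (0 : ℂ) 1, |τ z - τ w| ≤ C₁ * ‖z - w‖)
    (C₂ : ℝ) (hC₂ : 0 < C₂)
    (h2 : ∀ z ∈ ball (0 : ℂ) 1, τ z ≤ C₂ * (1 - ‖z‖))
    (C₃ a : ℝ) (hC₃0 : 0 < C₃) (hC₃1 : C₃ < 1) (ha : 0 < a)
    (h3 : ∀ z ∈ ball (0 : ℂ) 1, ∀ w ∈ ball (0 : ℂ) 1,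
      a * τ z < ‖w - z‖ → τ w ≤ τ z + C₃ * ‖w - z‖) :
    ∃ c > 0, ∀ z ∈ ball (0 : ℂ) 1, ∀ w ∈ ball (0 : ℂ) 1, a * τ z < ‖w - z‖ →
      c * (1 / (1 + C₃)) * Real.log (1 + (1 - C₃) * ‖z - w‖ / τ z) ≤
        confDist τ z w :=
  stmt_18_general τ hτpos C₁ hC₁ h1 C₃ a hC₃0 hC₃1 ha h3
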